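/- Let E and F be Banach spaces and α an ordinal. The set { T ∈ B(E, F) : Sz(T) ≤ ω^α } of bounded linear operators from E to F whose Szlenk index does not exceed ω^α is closed in B(E, F) with respect to the operator norm. -/

import Mathlib

open NormedSpace Metric
open scoped Ordinal Pointwise

noncomputable section

/-- A subset of the norm dual is weak-* open if it is open when transported to the weak-* dual. -/
def IsWeakStarOpen {E : Type*} [NormedAddCommGroup E] [NormedSpace ℝ E]
    (V : Set (StrongDual ℝ E)) : Prop :=
  IsOpen (StrongDual.toWeakDual '' V : Set (WeakDual ℝ E))

/-- A subset of the norm dual is weak-* compact if it is compact when transported to the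
weak-* dual. -/
def IsWeakStarCompact {E : Type*} [NormedAddCommGroup E] [NormedSpace ℝ E]
    (K : Set (StrongDual ℝ E)) : Prop :=
  IsCompact (StrongDual.toWeakDual '' K : Set (WeakDual ℝ E))

/-- The Szlenk derivation `s_ε(K)`. -/
def szlenkDeriv {E : Type*} [NormedAddCommGroup E] [NormedSpace ℝ E]
    (ε : ℝ) (K : Set (StrongDual ℝ E)) : Set (StrongDual ℝ E) :=
  {x | x ∈ K ∧ ∀ V : Set (StrongDual ℝ E), IsWeakStarOpen V → x ∈ V → ε < Metric.diam (K ∩ V)}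

/-- The transfinite iterates `s_ε^α(K)` of the Szlenk derivation. -/
noncomputable def szlenkIter {E : Type*} [NormedAddCommGroup E] [NormedSpace ℝ E]
    (ε : ℝ) (K : Set (StrongDual ℝ E)) (α : Ordinal) : Set (StrongDual ℝ E) :=
  Ordinal.limitRecOn α K (fun _ S => szlenkDeriv ε S)
    (fun o _ ih => ⋂ (β : Ordinal) (h : β < o), ih β h)

/-- `Sz(K) ≤ γ` : the `γ`-th Szlenk derivative of `K` is empty for every `ε > 0`. -/
def SzLE {E : Type*} [NormedAddCommGroup E] [NormedSpace ℝ E]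
    (K : Set (StrongDual ℝ E)) (γ : Ordinal) : Prop :=
  ∀ ε : ℝ, 0 < ε → szlenkIter ε K γ = ∅

/-- The image of a set under the adjoint of an operator. -/
def adjImage {E F : Type*} [NormedAddCommGroup E] [NormedSpace ℝ E]
    [NormedAddCommGroup F] [NormedSpace ℝ F] (T : E →L[ℝ] F) (K : Set (StrongDual ℝ F)) :
    Set (StrongDual ℝ E) :=
  (fun g : StrongDual ℝ F => g.comp T) '' K

/-- `Sz(T) ≤ γ` for an operator `T`. -/
def SzOpLE {E F : Type*} [NormedAddCommGroup E] [NormedSpace ℝ E]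
    [NormedAddCommGroup F] [NormedSpace ℝ F] (T : E →L[ℝ] F) (γ : Ordinal) : Prop :=
  SzLE (adjImage T (closedBall (0 : StrongDual ℝ F) 1)) γ

/-- `Sz(E) ≤ γ` for a Banach space `E`. -/
def SzSpaceLE (E : Type*) [NormedAddCommGroup E] [NormedSpace ℝ E] (γ : Ordinal) : Prop :=
  SzLE (closedBall (0 : StrongDual ℝ E) 1) γ

section Aux
open Set Bornology

variable {E F : Type*} [NormedAddCommGroup E] [NormedSpace ℝ E]
  [NormedAddCommGroup F] [NormedSpace ℝ F]

lemma szlenkIter_zero (ε : ℝ) (K : Set (StrongDual ℝ E)) : szlenkIter ε K 0 = K :=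
  Ordinal.limitRecOn_zero ..

lemma szlenkIter_succ (ε : ℝ) (K : Set (StrongDual ℝ E)) (γ : Ordinal) :
    szlenkIter ε K (γ + 1) = szlenkDeriv ε (szlenkIter ε K γ) :=
  Ordinal.limitRecOn_add_one ..

lemma szlenkIter_limit (ε : ℝ) (K : Set (StrongDual ℝ E)) {γ : Ordinal} (h : Order.IsSuccLimit γ) :
    szlenkIter ε K γ = ⋂ (β : Ordinal) (_ : β < γ), szlenkIter ε K β :=
  Ordinal.limitRecOn_limit _ _ _ _ h

/-- The "upstairs" derivation on subsets of the dual of `F`, relative to an operator `T`. -/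
def opDeriv (T : E →L[ℝ] F) (ε : ℝ) (A : Set (StrongDual ℝ F)) : Set (StrongDual ℝ F) :=
  {y | y ∈ A ∧ ∀ U : Set (StrongDual ℝ F), IsWeakStarOpen U → y ∈ U →
    ε < Metric.diam (adjImage T (A ∩ U))}

noncomputable def opIter (T : E →L[ℝ] F) (ε : ℝ) (A : Set (StrongDual ℝ F)) (γ : Ordinal) :
    Set (StrongDual ℝ F) :=
  Ordinal.limitRecOn γ A (fun _ S => opDeriv T ε S)
    (fun o _ ih => ⋂ (β : Ordinal) (h : β < o), ih β h)

lemma opIter_zero (T : E →L[ℝ] F) (ε : ℝ) (A : Set (StrongDual ℝ F)) : opIter T ε A 0 = A :=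
  Ordinal.limitRecOn_zero ..

lemma opIter_succ (T : E →L[ℝ] F) (ε : ℝ) (A : Set (StrongDual ℝ F)) (γ : Ordinal) :
    opIter T ε A (γ + 1) = opDeriv T ε (opIter T ε A γ) :=
  Ordinal.limitRecOn_add_one ..

lemma opIter_limit (T : E →L[ℝ] F) (ε : ℝ) (A : Set (StrongDual ℝ F)) {γ : Ordinal}
    (h : Order.IsSuccLimit γ) : opIter T ε A γ = ⋂ (β : Ordinal) (_ : β < γ), opIter T ε A β :=
  Ordinal.limitRecOn_limit _ _ _ _ h

/-- The adjoint map on weak-* duals. -/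
def wAdj (T : E →L[ℝ] F) : WeakDual ℝ F → WeakDual ℝ E :=
  fun g => StrongDual.toWeakDual ((WeakDual.toStrongDual g).comp T)

lemma continuous_wAdj (T : E →L[ℝ] F) : Continuous (wAdj T) :=
  WeakDual.continuous_of_continuous_eval fun y => WeakDual.eval_continuous (T y)

lemma image_toWeakDual_preimage (T : E →L[ℝ] F) (s : Set (StrongDual ℝ E)) :
    StrongDual.toWeakDual '' ((fun g : StrongDual ℝ F => g.comp T) ⁻¹' s)
      = wAdj T ⁻¹' (StrongDual.toWeakDual '' s) := by
  ext z
  constructor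
  · rintro ⟨g, hg, rfl⟩
    exact ⟨g.comp T, hg, rfl⟩
  · rintro ⟨g, hg, hgz⟩
    refine ⟨WeakDual.toStrongDual z, ?_, rfl⟩
    have h2 : (WeakDual.toStrongDual z).comp T = g := by
      have := congrArg WeakDual.toStrongDual hgz
      simpa [wAdj] using this.symm
    show (WeakDual.toStrongDual z).comp T ∈ s
    rw [h2]; exact hg

lemma image_adjImage (T : E →L[ℝ] F) (s : Set (StrongDual ℝ F)) :
    StrongDual.toWeakDual '' (adjImage T s) = wAdj T '' (StrongDual.toWeakDual '' s) := by
  rw [adjImage, Set.image_image, Set.image_image]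
  rfl

end Aux

section Aux2
open Set Bornology

variable {E F : Type*} [NormedAddCommGroup E] [NormedSpace ℝ E]
  [NormedAddCommGroup F] [NormedSpace ℝ F]

lemma isWeakStarOpen_univ : IsWeakStarOpen (univ : Set (StrongDual ℝ E)) := by
  unfold IsWeakStarOpen
  rw [Set.image_univ_of_surjective StrongDual.toWeakDual.surjective]
  exact isOpen_univ

lemma IsWeakStarCompact.isWeakStarOpen_compl {K : Set (StrongDual ℝ E)}
    (h : IsWeakStarCompact K) : IsWeakStarOpen Kᶜ := by
  unfold IsWeakStarOpen
  rw [Set.image_compl_eq StrongDual.toWeakDual.bijective]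
  exact h.isClosed.isOpen_compl

lemma IsWeakStarCompact.diff {K U : Set (StrongDual ℝ E)} (hK : IsWeakStarCompact K)
    (hU : IsWeakStarOpen U) : IsWeakStarCompact (K \ U) := by
  unfold IsWeakStarCompact
  rw [Set.image_diff StrongDual.toWeakDual.injective]
  exact IsCompact.diff hK hU

lemma isWeakStarOpen_sUnion {S : Set (Set (StrongDual ℝ E))} (h : ∀ U ∈ S, IsWeakStarOpen U) :
    IsWeakStarOpen (⋃₀ S) := by
  unfold IsWeakStarOpen
  rw [Set.sUnion_eq_biUnion, Set.image_iUnion₂]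
  exact isOpen_biUnion fun U hU => h U hU

lemma isWeakStarOpen_biUnion {ι : Type*} {t : Finset ι} {U : ι → Set (StrongDual ℝ E)}
    (h : ∀ i ∈ t, IsWeakStarOpen (U i)) : IsWeakStarOpen (⋃ i ∈ t, U i) := by
  unfold IsWeakStarOpen
  rw [Set.image_iUnion₂]
  exact isOpen_biUnion h

lemma isWeakStarOpen_preimage (T : E →L[ℝ] F) {V : Set (StrongDual ℝ E)} (hV : IsWeakStarOpen V) :
    IsWeakStarOpen ((fun g : StrongDual ℝ F => g.comp T) ⁻¹' V) := by
  unfold IsWeakStarOpen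
  rw [image_toWeakDual_preimage]
  exact hV.preimage (continuous_wAdj T)

lemma IsWeakStarCompact.adjImage {A : Set (StrongDual ℝ F)} (hA : IsWeakStarCompact A)
    (T : E →L[ℝ] F) : IsWeakStarCompact (adjImage T A) := by
  unfold IsWeakStarCompact
  rw [image_adjImage]
  exact hA.image (continuous_wAdj T)

lemma isWeakStarCompact_fiber (T : E →L[ℝ] F) {A : Set (StrongDual ℝ F)}
    (hA : IsWeakStarCompact A) (x : StrongDual ℝ E) :
    IsWeakStarCompact (A ∩ (fun g : StrongDual ℝ F => g.comp T) ⁻¹' {x}) := by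
  unfold IsWeakStarCompact
  rw [Set.image_inter StrongDual.toWeakDual.injective, image_toWeakDual_preimage,
    Set.image_singleton]
  exact hA.inter_right (isClosed_singleton.preimage (continuous_wAdj T))

lemma isBounded_adjImage (T : E →L[ℝ] F) {s : Set (StrongDual ℝ F)} {r : ℝ}
    (hs : s ⊆ closedBall 0 r) : IsBounded (adjImage T s) := by
  refine (isBounded_closedBall (x := (0 : StrongDual ℝ E)) (r := r * ‖T‖)).subset ?_
  rintro _ ⟨g, hg, rfl⟩
  rw [mem_closedBall_zero_iff]
  calc ‖g.comp T‖ ≤ ‖g‖ * ‖T‖ := ContinuousLinearMap.opNorm_comp_le g T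
    _ ≤ r * ‖T‖ := by
        have hg' : ‖g‖ ≤ r := mem_closedBall_zero_iff.mp (hs hg)
        exact mul_le_mul_of_nonneg_right hg' (norm_nonneg T)

lemma szlenkDeriv_subset (ε : ℝ) (K : Set (StrongDual ℝ E)) : szlenkDeriv ε K ⊆ K :=
  fun _ hx => hx.1

lemma opDeriv_subset (T : E →L[ℝ] F) (ε : ℝ) (A : Set (StrongDual ℝ F)) : opDeriv T ε A ⊆ A :=
  fun _ hx => hx.1

lemma szlenkIter_subset (ε : ℝ) (K : Set (StrongDual ℝ E)) (γ : Ordinal) :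
    szlenkIter ε K γ ⊆ K := by
  induction γ using Ordinal.limitRecOn with
  | zero => rw [szlenkIter_zero]
  | add_one γ ih => rw [szlenkIter_succ]; exact (szlenkDeriv_subset _ _).trans ih
  | limit γ hγ ih =>
      rw [szlenkIter_limit _ _ hγ]
      exact fun x hx => ih 0 hγ.pos (Set.mem_iInter₂.mp hx 0 hγ.pos)

lemma opIter_subset (T : E →L[ℝ] F) (ε : ℝ) (A : Set (StrongDual ℝ F)) (γ : Ordinal) :
    opIter T ε A γ ⊆ A := by
  induction γ using Ordinal.limitRecOn with
  | zero => rw [opIter_zero]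
  | add_one γ ih => rw [opIter_succ]; exact (opDeriv_subset _ _ _).trans ih
  | limit γ hγ ih =>
      rw [opIter_limit _ _ _ hγ]
      exact fun x hx => ih 0 hγ.pos (Set.mem_iInter₂.mp hx 0 hγ.pos)

lemma opIter_anti (T : E →L[ℝ] F) (ε : ℝ) (A : Set (StrongDual ℝ F)) {β γ : Ordinal}
    (h : β ≤ γ) : opIter T ε A γ ⊆ opIter T ε A β := by
  induction γ using Ordinal.limitRecOn with
  | zero => rw [nonpos_iff_eq_zero.mp h]
  | add_one γ ih =>
      rcases eq_or_lt_of_le h with rfl | hlt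
      · exact subset_rfl
      · have hβγ : β ≤ γ := Order.lt_succ_iff.mp hlt
        rw [opIter_succ]
        exact (opDeriv_subset _ _ _).trans (ih hβγ)
  | limit γ hγ ih =>
      rcases eq_or_lt_of_le h with rfl | hlt
      · exact subset_rfl
      · rw [opIter_limit _ _ _ hγ]
        exact fun x hx => Set.mem_iInter₂.mp hx β hlt

lemma szlenkDeriv_mono (ε : ℝ) {K K' : Set (StrongDual ℝ E)} (h : K ⊆ K') (hb : IsBounded K') :
    szlenkDeriv ε K ⊆ szlenkDeriv ε K' := by
  rintro x ⟨hxK, hx⟩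
  refine ⟨h hxK, fun V hV hxV => ?_⟩
  exact (hx V hV hxV).trans_le
    (diam_mono (Set.inter_subset_inter_left V h) (hb.subset Set.inter_subset_left))

lemma isWeakStarCompact_opDeriv (T : E →L[ℝ] F) (ε : ℝ) {A : Set (StrongDual ℝ F)}
    (hA : IsWeakStarCompact A) : IsWeakStarCompact (opDeriv T ε A) := by
  have heq : opDeriv T ε A
      = A \ ⋃₀ {U | IsWeakStarOpen U ∧ ¬ ε < Metric.diam (adjImage T (A ∩ U))} := by
    ext y
    constructor
    · rintro ⟨h1, h2⟩
      refine ⟨h1, ?_⟩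
      rintro ⟨U, ⟨hWO, hnd⟩, hyU⟩
      exact hnd (h2 U hWO hyU)
    · rintro ⟨h1, h2⟩
      refine ⟨h1, fun U hWO hyU => ?_⟩
      by_contra hnd
      exact h2 ⟨U, ⟨hWO, hnd⟩, hyU⟩
  rw [heq]
  exact hA.diff (isWeakStarOpen_sUnion fun U hU => hU.1)

lemma isWeakStarCompact_opIter (T : E →L[ℝ] F) (ε : ℝ) {A : Set (StrongDual ℝ F)}
    (hA : IsWeakStarCompact A) (γ : Ordinal) : IsWeakStarCompact (opIter T ε A γ) := by
  induction γ using Ordinal.limitRecOn with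
  | zero => rwa [opIter_zero]
  | add_one γ ih => rw [opIter_succ]; exact isWeakStarCompact_opDeriv T ε ih
  | limit γ hγ ih =>
      rw [opIter_limit _ _ _ hγ]
      unfold IsWeakStarCompact
      rw [Set.image_iInter₂ StrongDual.toWeakDual.bijective]
      refine IsCompact.of_isClosed_subset (ih 0 hγ.pos) ?_
        (fun x hx => Set.mem_iInter₂.mp hx 0 hγ.pos)
      exact isClosed_iInter fun β => isClosed_iInter fun hβ => (ih β hβ).isClosed

end Aux2

section Aux3
open Set Bornology

variable {E F : Type*} [NormedAddCommGroup E] [NormedSpace ℝ E]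
  [NormedAddCommGroup F] [NormedSpace ℝ F]

/-- Easy direction: the adjoint image of the upstairs derivation is contained in the
downstairs Szlenk derivation. -/
lemma adjImage_opDeriv_subset (T : E →L[ℝ] F) {A : Set (StrongDual ℝ F)}
    (hb : IsBounded (adjImage T A)) (ε : ℝ) :
    adjImage T (opDeriv T ε A) ⊆ szlenkDeriv ε (adjImage T A) := by
  rintro _ ⟨y, ⟨hyA, hy⟩, rfl⟩
  refine ⟨⟨y, hyA, rfl⟩, fun V hV hxV => ?_⟩
  have hU := isWeakStarOpen_preimage T hV
  refine (hy _ hU hxV).trans_le (diam_mono ?_ (hb.subset Set.inter_subset_left))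
  rintro _ ⟨g, ⟨hgA, hgU⟩, rfl⟩
  exact ⟨⟨g, hgA, rfl⟩, hgU⟩

/-- Hard direction, one step: points of the downstairs Szlenk derivation have preimages
in the upstairs derivation (with `ε/2`). Uses weak-* compactness of `A`. -/
lemma szlenkDeriv_subset_adjImage (T : E →L[ℝ] F) {A : Set (StrongDual ℝ F)}
    (hA : IsWeakStarCompact A) (hb : IsBounded (adjImage T A)) {ε : ℝ} (hε : 0 ≤ ε) :
    szlenkDeriv ε (adjImage T A) ⊆ adjImage T (opDeriv T (ε / 2) A) := by
  intro x hx
  obtain ⟨hxK, hV⟩ := hx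
  by_contra hcon
  set C : Set (StrongDual ℝ F) := A ∩ (fun g : StrongDual ℝ F => g.comp T) ⁻¹' {x} with hCdef
  have hfib : ∀ y ∈ C, ∃ U : Set (StrongDual ℝ F), IsWeakStarOpen U ∧ y ∈ U ∧
      Metric.diam (adjImage T (A ∩ U)) ≤ ε / 2 := by
    rintro y ⟨hyA, hyx⟩
    by_contra h
    push_neg at h
    refine hcon ⟨y, ⟨hyA, fun U hU hyU => ?_⟩, hyx⟩
    exact h U hU hyU
  choose! U hUo hUm hUd using hfib
  -- compactness of the fiber in the weak-* topology
  have hC : IsWeakStarCompact C := isWeakStarCompact_fiber T hA x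
  -- finite subcover
  have hcover : StrongDual.toWeakDual '' C ⊆
      ⋃ y : C, StrongDual.toWeakDual '' (U y.1) := by
    rintro _ ⟨y, hy, rfl⟩
    exact Set.mem_iUnion.mpr ⟨⟨y, hy⟩, ⟨y, hUm y hy, rfl⟩⟩
  obtain ⟨t, ht⟩ := hC.elim_finite_subcover (fun y : C => StrongDual.toWeakDual '' (U y.1))
    (fun y => hUo y.1 y.2) hcover
  set Ubig : Set (StrongDual ℝ F) := ⋃ y ∈ t, U y.1 with hUbig
  have hUbigO : IsWeakStarOpen Ubig := isWeakStarOpen_biUnion fun i _ => hUo i.1 i.2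
  have hCU : C ⊆ Ubig := by
    intro y hy
    have h' := ht ⟨y, hy, rfl⟩
    simp only [Set.mem_iUnion] at h'
    obtain ⟨i, hit, z, hz, hzy⟩ := h'
    exact Set.mem_biUnion hit ((StrongDual.toWeakDual.injective hzy) ▸ hz)
  have hball : adjImage T (A ∩ Ubig) ⊆ closedBall x (ε / 2) := by
    rintro _ ⟨g, ⟨hgA, hgU⟩, rfl⟩
    obtain ⟨i, hit, hgi⟩ : ∃ i ∈ t, g ∈ U i.1 := by simpa [hUbig] using hgU
    have hxi : x ∈ adjImage T (A ∩ U i.1) := by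
      obtain ⟨hiA, hix⟩ := i.2
      exact ⟨i.1, ⟨hiA, hUm i.1 i.2⟩, hix⟩
    have hgmem : g.comp T ∈ adjImage T (A ∩ U i.1) := ⟨g, ⟨hgA, hgi⟩, rfl⟩
    have hbd : IsBounded (adjImage T (A ∩ U i.1)) :=
      hb.subset (Set.image_mono Set.inter_subset_left)
    have := Metric.dist_le_diam_of_mem hbd hgmem hxi
    exact mem_closedBall.mpr (this.trans (hUd i.1 i.2))
  -- the weak-* open set around x
  have hrest : IsWeakStarCompact (adjImage T (A \ Ubig)) :=
    (hA.diff hUbigO).adjImage T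
  have hVo : IsWeakStarOpen (adjImage T (A \ Ubig))ᶜ := hrest.isWeakStarOpen_compl
  have hxV : x ∈ (adjImage T (A \ Ubig))ᶜ := by
    rintro ⟨y, ⟨hyA, hyU⟩, hyx⟩
    exact hyU (hCU ⟨hyA, hyx⟩)
  have hlt := hV _ hVo hxV
  have hsub : adjImage T A ∩ (adjImage T (A \ Ubig))ᶜ ⊆ closedBall x (ε / 2) := by
    rintro z ⟨hz1, hzc⟩
    obtain ⟨g, hgA, rfl⟩ := hz1
    by_cases hgU : g ∈ Ubig
    · exact hball ⟨g, ⟨hgA, hgU⟩, rfl⟩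
    · exact absurd ⟨g, ⟨hgA, hgU⟩, rfl⟩ hzc
  have hle : Metric.diam (adjImage T A ∩ (adjImage T (A \ Ubig))ᶜ) ≤ ε := by
    have h2 := diam_mono hsub isBounded_closedBall
    have h3 := Metric.diam_closedBall (x := x) (by linarith : (0:ℝ) ≤ ε / 2)
    linarith
  linarith


end Aux3

section Aux4
open Set Bornology

variable {E F : Type*} [NormedAddCommGroup E] [NormedSpace ℝ E]
  [NormedAddCommGroup F] [NormedSpace ℝ F]

/-- Easy direction, iterated. -/
lemma adjImage_opIter_subset (T : E →L[ℝ] F) {A : Set (StrongDual ℝ F)}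
    (hb : IsBounded (adjImage T A)) (ε : ℝ) (γ : Ordinal) :
    adjImage T (opIter T ε A γ) ⊆ szlenkIter ε (adjImage T A) γ := by
  induction γ using Ordinal.limitRecOn with
  | zero => rw [opIter_zero, szlenkIter_zero]
  | add_one γ ih =>
      rw [opIter_succ, szlenkIter_succ]
      have hb1 : IsBounded (adjImage T (opIter T ε A γ)) :=
        hb.subset (Set.image_mono (opIter_subset T ε A γ))
      have hb2 : IsBounded (szlenkIter ε (adjImage T A) γ) :=
        hb.subset (szlenkIter_subset ε (adjImage T A) γ)
      exact (adjImage_opDeriv_subset T hb1 ε).trans (szlenkDeriv_mono ε ih hb2)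
  | limit γ hγ ih =>
      rw [opIter_limit _ _ _ hγ, szlenkIter_limit _ _ hγ]
      rintro _ ⟨y, hy, rfl⟩
      refine Set.mem_iInter₂.mpr fun β hβ => ?_
      exact ih β hβ ⟨y, Set.mem_iInter₂.mp hy β hβ, rfl⟩

/-- Hard direction, iterated. -/
lemma szlenkIter_subset_adjImage (T : E →L[ℝ] F) {A : Set (StrongDual ℝ F)}
    (hA : IsWeakStarCompact A) (hb : IsBounded (adjImage T A)) {ε : ℝ} (hε : 0 ≤ ε)
    (γ : Ordinal) :
    szlenkIter ε (adjImage T A) γ ⊆ adjImage T (opIter T (ε / 2) A γ) := by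
  induction γ using Ordinal.limitRecOn with
  | zero => rw [opIter_zero, szlenkIter_zero]
  | add_one γ ih =>
      rw [opIter_succ, szlenkIter_succ]
      have hD : IsWeakStarCompact (opIter T (ε / 2) A γ) :=
        isWeakStarCompact_opIter T (ε / 2) hA γ
      have hb1 : IsBounded (adjImage T (opIter T (ε / 2) A γ)) :=
        hb.subset (Set.image_mono (opIter_subset T (ε / 2) A γ))
      exact (szlenkDeriv_mono ε ih hb1).trans (szlenkDeriv_subset_adjImage T hD hb1 hε)
  | limit γ hγ ih =>
      rw [opIter_limit _ _ _ hγ, szlenkIter_limit _ _ hγ]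
      intro x hx
      have hx' : ∀ β (hβ : β < γ), x ∈ adjImage T (opIter T (ε / 2) A β) :=
        fun β hβ => ih β hβ (Set.mem_iInter₂.mp hx β hβ)
      haveI : Nonempty {β : Ordinal // β < γ} := ⟨⟨0, hγ.pos⟩⟩
      set Cf : {β : Ordinal // β < γ} → Set (WeakDual ℝ F) := fun β =>
        StrongDual.toWeakDual '' (opIter T (ε / 2) A β.1
          ∩ (fun g : StrongDual ℝ F => g.comp T) ⁻¹' {x}) with hCf
      have hne : ∀ β, (Cf β).Nonempty := by
        rintro ⟨β, hβ⟩
        obtain ⟨y, hy, hyx⟩ := hx' β hβ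
        exact ⟨StrongDual.toWeakDual y, y, ⟨hy, hyx⟩, rfl⟩
      have hcomp : ∀ β, IsCompact (Cf β) := fun β =>
        isWeakStarCompact_fiber T (isWeakStarCompact_opIter T (ε / 2) hA β.1) x
      have hdir : Directed (· ⊇ ·) Cf := by
        rintro ⟨β₁, h₁⟩ ⟨β₂, h₂⟩
        refine ⟨⟨max β₁ β₂, max_lt h₁ h₂⟩, ?_, ?_⟩ <;>
          exact Set.image_mono (Set.inter_subset_inter_left _
            (opIter_anti T (ε / 2) A (by simp)))
      obtain ⟨z, hz⟩ := IsCompact.nonempty_iInter_of_directed_nonempty_isCompact_isClosed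
        Cf hdir hne hcomp (fun β => (hcomp β).isClosed)
      obtain ⟨y, ⟨hy0, hyx⟩, hyz⟩ := Set.mem_iInter.mp hz ⟨0, hγ.pos⟩
      refine ⟨y, Set.mem_iInter₂.mpr fun β hβ => ?_, hyx⟩
      obtain ⟨y', ⟨hy', _⟩, hy'z⟩ := Set.mem_iInter.mp hz ⟨β, hβ⟩
      have : y' = y := StrongDual.toWeakDual.injective (hy'z.trans hyz.symm)
      exact this ▸ hy'

/-- Diameter comparison under a uniform perturbation. -/
lemma diam_image_le_of_dist_le {f g : StrongDual ℝ F → StrongDual ℝ E} {s : Set (StrongDual ℝ F)} {δ : ℝ}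
    (hδ : 0 ≤ δ) (h : ∀ y ∈ s, dist (f y) (g y) ≤ δ) (hb : IsBounded (g '' s)) :
    Metric.diam (f '' s) ≤ Metric.diam (g '' s) + 2 * δ := by
  refine Metric.diam_le_of_forall_dist_le
    (by have := Metric.diam_nonneg (s := g '' s); linarith) ?_
  rintro _ ⟨y₁, hy₁, rfl⟩ _ ⟨y₂, hy₂, rfl⟩
  have h4 := dist_triangle4 (f y₁) (g y₁) (g y₂) (f y₂)
  have hd : dist (g y₁) (g y₂) ≤ Metric.diam (g '' s) :=
    Metric.dist_le_diam_of_mem hb ⟨y₁, hy₁, rfl⟩ ⟨y₂, hy₂, rfl⟩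
  have h1 := h y₁ hy₁
  have h2 := h y₂ hy₂
  rw [dist_comm (g y₂) (f y₂)] at h4
  linarith

/-- Perturbation of the upstairs iterates. -/
lemma opIter_perturb {T S : E →L[ℝ] F} {A : Set (StrongDual ℝ F)}
    (hA1 : A ⊆ closedBall 0 1) {δ ε : ℝ} (hδ : ‖T - S‖ ≤ δ) (γ : Ordinal) :
    opIter T ε A γ ⊆ opIter S (ε - 2 * δ) A γ := by
  have hδ0 : (0 : ℝ) ≤ δ := (norm_nonneg _).trans hδ
  have hdist : ∀ g : StrongDual ℝ F, g ∈ A → dist (g.comp T) (g.comp S) ≤ δ := by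
    intro g hg
    rw [dist_eq_norm, ← ContinuousLinearMap.comp_sub]
    calc ‖g.comp (T - S)‖ ≤ ‖g‖ * ‖T - S‖ := ContinuousLinearMap.opNorm_comp_le _ _
      _ ≤ 1 * δ := mul_le_mul (mem_closedBall_zero_iff.mp (hA1 hg)) hδ (norm_nonneg _)
          zero_le_one
      _ = δ := one_mul δ
  induction γ using Ordinal.limitRecOn with
  | zero => rw [opIter_zero, opIter_zero]
  | add_one γ ih =>
      rw [opIter_succ, opIter_succ]
      rintro y ⟨hy1, hy2⟩
      refine ⟨ih hy1, fun U hU hyU => ?_⟩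
      have hTS : opIter T ε A γ ∩ U ⊆ opIter S (ε - 2 * δ) A γ ∩ U :=
        Set.inter_subset_inter_left U ih
      have hsub : opIter S (ε - 2 * δ) A γ ∩ U ⊆ A :=
        Set.inter_subset_left.trans (opIter_subset S _ A γ)
      have hbS : Bornology.IsBounded (adjImage S (opIter S (ε - 2 * δ) A γ ∩ U)) :=
        isBounded_adjImage S (hsub.trans hA1)
      have hbT : Bornology.IsBounded (adjImage T (opIter S (ε - 2 * δ) A γ ∩ U)) :=
        isBounded_adjImage T (hsub.trans hA1)
      have step1 : ε < Metric.diam (adjImage T (opIter S (ε - 2 * δ) A γ ∩ U)) :=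
        (hy2 U hU hyU).trans_le (diam_mono (Set.image_mono hTS) hbT)
      have step2 := diam_image_le_of_dist_le (f := fun g : StrongDual ℝ F => g.comp T)
        (g := fun g : StrongDual ℝ F => g.comp S) (s := opIter S (ε - 2 * δ) A γ ∩ U) hδ0
        (fun y hy => hdist y (hsub hy)) hbS
      have : ε < Metric.diam (adjImage S (opIter S (ε - 2 * δ) A γ ∩ U)) + 2 * δ := by
        calc ε < Metric.diam (adjImage T (opIter S (ε - 2 * δ) A γ ∩ U)) := step1
          _ ≤ _ := step2
      linarith
  | limit γ hγ ih =>
      rw [opIter_limit _ _ _ hγ, opIter_limit _ _ _ hγ]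
      intro y hy
      exact Set.mem_iInter₂.mpr fun β hβ => ih β hβ (Set.mem_iInter₂.mp hy β hβ)

/-- Banach–Alaoglu in terms of `IsWeakStarCompact`. -/
lemma isWeakStarCompact_closedBall (r : ℝ) :
    IsWeakStarCompact (closedBall (0 : StrongDual ℝ F) r) := by
  have h := WeakDual.isCompact_closedBall (𝕜 := ℝ) (E := F) 0 r
  have heq : (StrongDual.toWeakDual '' closedBall (0 : StrongDual ℝ F) r : Set (WeakDual ℝ F))
      = WeakDual.toStrongDual ⁻¹' closedBall (0 : StrongDual ℝ F) r := by
    ext z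
    constructor
    · rintro ⟨g, hg, rfl⟩; exact hg
    · intro hz; exact ⟨WeakDual.toStrongDual z, hz, rfl⟩
  rw [IsWeakStarCompact, heq]
  exact h

end Aux4

/-- The set of bounded linear operators `E → F` whose Szlenk index does not exceed `ω^α`
is closed in `B(E, F)` with respect to the operator norm. -/
theorem isClosed_szOpLE
    {E F : Type*} [NormedAddCommGroup E] [NormedSpace ℝ E] [CompleteSpace E]
    [NormedAddCommGroup F] [NormedSpace ℝ F] [CompleteSpace F]
    (α : Ordinal) :
    IsClosed {T : E →L[ℝ] F | SzOpLE T (Ordinal.omega0 ^ α)} := by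
  refine isClosed_of_closure_subset fun T hT => ?_
  intro ε hε
  obtain ⟨S, hS, hdistTS⟩ := Metric.mem_closure_iff.mp hT (ε / 16) (by positivity)
  have hδ : ‖T - S‖ < ε / 16 := by rwa [← dist_eq_norm]
  have hδ0 : (0 : ℝ) ≤ ‖T - S‖ := norm_nonneg _
  have hB : IsWeakStarCompact (closedBall (0 : StrongDual ℝ F) 1) :=
    isWeakStarCompact_closedBall 1
  have hbT : Bornology.IsBounded (adjImage T (closedBall (0 : StrongDual ℝ F) 1)) :=
    isBounded_adjImage T subset_rfl
  have hbS : Bornology.IsBounded (adjImage S (closedBall (0 : StrongDual ℝ F) 1)) :=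
    isBounded_adjImage S subset_rfl
  have h1 := szlenkIter_subset_adjImage T hB hbT hε.le (Ordinal.omega0 ^ α)
  have h2 := opIter_perturb (T := T) (S := S) (ε := ε / 2)
    (A := closedBall (0 : StrongDual ℝ F) 1) subset_rfl (le_refl ‖T - S‖) (Ordinal.omega0 ^ α)
  have h3 := adjImage_opIter_subset S hbS (ε / 2 - 2 * ‖T - S‖) (Ordinal.omega0 ^ α)
  have h4 : szlenkIter (ε / 2 - 2 * ‖T - S‖) (adjImage S (closedBall (0 : StrongDual ℝ F) 1))
      (Ordinal.omega0 ^ α) = ∅ := hS _ (by linarith)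
  have h5 : opIter S (ε / 2 - 2 * ‖T - S‖) (closedBall (0 : StrongDual ℝ F) 1)
      (Ordinal.omega0 ^ α) = ∅ := by
    have himg : adjImage S (opIter S (ε / 2 - 2 * ‖T - S‖) (closedBall (0 : StrongDual ℝ F) 1)
        (Ordinal.omega0 ^ α)) = ∅ := Set.subset_empty_iff.mp (h4 ▸ h3)
    exact Set.image_eq_empty.mp himg
  rw [Set.eq_empty_iff_forall_notMem]
  intro x hx
  obtain ⟨y, hy, rfl⟩ := h1 hx
  have hmem := h2 hy
  rw [h5] at hmem
  exact hmem
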